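/- arXiv:1503.00050 — 2 statements merged into one kernel-verified Lean document; each statement's English description precedes it below -/
import Mathlib

section
/- Let 1<p<∞ and let a,b ∈ L^∞(𝕋) with ã invertible in L^∞(𝕋). Set ℛ := diag(T(a)+H(b), T(a)−H(b)) on H^p(𝕋)×H^p(𝕋). Let y = (g,h)^T ∈ H^p(𝕋)×H^p(𝕋). If x₀ = (φ,ψ)^T ∈ H^p(𝕋)×H^p(𝕋) satisfies ℛx₀ = y, then the element X₀ := (φ+ψ, P(b̃(φ+ψ) + ã·J(φ−ψ)))^T satisfies 𝒫V(a,b)𝒫 X₀ = Y, where Y := 𝒫A₂^{-1}A₁^{-1}𝒥^{-1}y. -/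
open MeasureTheory Complex Real BigOperators
open scoped ENNReal

noncomputable section

instance fact2pi : Fact (0 < 2 * π) := ⟨by positivity⟩

/-- The unit circle, modelled additively as `ℝ / 2πℤ`. -/
abbrev UC : Type := AddCircle (2 * π)

/-- Normalized arc-length (Haar) measure on the circle. -/
abbrev volUC : Measure UC := volume

/-- The Lebesgue space `L^p(𝕋)`. -/
abbrev LpC (p : ℝ≥0∞) : Type := Lp ℂ p volUC

/-- The reflection `ã(t) := a(1/t)` (in additive coordinates, `t ↦ -t`). -/
def tildeF (a : UC → ℂ) : UC → ℂ := fun t => a (-t)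

/-- The function `t ↦ t^n` on the circle (in additive coordinates, `fourier n`). -/
def tpow (n : ℤ) : UC → ℂ := fun t => fourier n t

/-- The first function `c := b̃·ã⁻¹` of the subordinated pair (here `atinv` denotes `ã⁻¹`). -/
def subC (b atinv : UC → ℂ) : UC → ℂ := fun t => tildeF b t * atinv t

/-- The second function `d := b·ã⁻¹` of the subordinated pair. -/
def subD (b atinv : UC → ℂ) : UC → ℂ := fun t => b t * atinv t

/-- The basic operators on `L^p(𝕋)`: the Riesz projection `P` (characterized by its action on
Fourier coefficients), the flip `J`, `(Jf)(t) = t⁻¹ f(1/t)` (characterized on Fourier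
coefficients by `n ↦ -n-1`), and the multiplication operators `M a` for `a ∈ L^∞`. -/
structure CircleOps (p : ℝ≥0∞) [Fact (1 ≤ p)] where
  P : LpC p →L[ℂ] LpC p
  J : LpC p →L[ℂ] LpC p
  M : (UC → ℂ) → LpC p →L[ℂ] LpC p
  P_spec : ∀ (f : LpC p) (n : ℤ),
    fourierCoeff (⇑(P f)) n = if 0 ≤ n then fourierCoeff (⇑f) n else 0
  J_spec : ∀ (f : LpC p) (n : ℤ),
    fourierCoeff (⇑(J f)) n = fourierCoeff (⇑f) (-n - 1)
  M_spec : ∀ (a : UC → ℂ), MemLp a ⊤ volUC →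
    ∀ f : LpC p, ⇑(M a f) =ᵐ[volUC] fun t => a t * f t

/-- The Hardy space `H^p(𝕋)`, as the subset of `L^p(𝕋)` of functions whose negatively indexed
Fourier coefficients vanish. -/
def HardyS (p : ℝ≥0∞) [Fact (1 ≤ p)] : Set (LpC p) :=
  {f | ∀ n : ℤ, n < 0 → fourierCoeff (⇑f) n = 0}

/-- A `2×2` operator matrix acting on `E × E`. -/
def mat2 {E : Type*} [NormedAddCommGroup E] [NormedSpace ℂ E]
    (A B C D : E →L[ℂ] E) : (E × E) →L[ℂ] (E × E) :=
  ((A ∘L ContinuousLinearMap.fst ℂ E E) + (B ∘L ContinuousLinearMap.snd ℂ E E)).prod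
    ((C ∘L ContinuousLinearMap.fst ℂ E E) + (D ∘L ContinuousLinearMap.snd ℂ E E))

namespace CircleOps

variable {p : ℝ≥0∞} [Fact (1 ≤ p)] (O : CircleOps p)

/-- `Q := I - P`. -/
def Q : LpC p →L[ℂ] LpC p := ContinuousLinearMap.id ℂ (LpC p) - O.P

/-- The Toeplitz operator `T(a) := P a P`. -/
def Toep (a : UC → ℂ) : LpC p →L[ℂ] LpC p := O.P ∘L O.M a ∘L O.P

/-- The Hankel operator `H(b) := P b Q J`. -/
def Hank (b : UC → ℂ) : LpC p →L[ℂ] LpC p := O.P ∘L O.M b ∘L O.Q ∘L O.J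

/-- `ℛ := diag(T(a)+H(b), T(a)-H(b))`. -/
def Rdiag (a b : UC → ℂ) : (LpC p × LpC p) →L[ℂ] (LpC p × LpC p) :=
  mat2 (O.Toep a + O.Hank b) 0 0 (O.Toep a - O.Hank b)

/-- `𝒫 := diag(P,P)`. -/
def PP : (LpC p × LpC p) →L[ℂ] (LpC p × LpC p) := mat2 O.P 0 0 O.P

/-- `𝒬 := diag(Q,Q)`. -/
def QQ : (LpC p × LpC p) →L[ℂ] (LpC p × LpC p) := mat2 O.Q 0 0 O.Q

/-- `𝒥 := (1/2)[[I,J],[I,-J]]`. -/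
def Jop : (LpC p × LpC p) →L[ℂ] (LpC p × LpC p) :=
  (2:ℂ)⁻¹ • mat2 (ContinuousLinearMap.id ℂ (LpC p)) O.J (ContinuousLinearMap.id ℂ (LpC p)) (-O.J)

/-- `𝒥⁻¹ = [[I,I],[J,-J]]`. -/
def Jinv : (LpC p × LpC p) →L[ℂ] (LpC p × LpC p) :=
  mat2 (ContinuousLinearMap.id ℂ (LpC p)) (ContinuousLinearMap.id ℂ (LpC p)) O.J (-O.J)

/-- `T(V(a,b)) = 𝒫 V(a,b) 𝒫`, where `V(a,b) = [[a - b b̃ ã⁻¹, b ã⁻¹],[-b̃ ã⁻¹, ã⁻¹]]`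
(`atinv` denotes `ã⁻¹`). -/
def TV (a b atinv : UC → ℂ) : (LpC p × LpC p) →L[ℂ] (LpC p × LpC p) :=
  mat2 (O.Toep fun t => a t - b t * tildeF b t * atinv t)
    (O.Toep fun t => b t * atinv t)
    (O.Toep fun t => -(tildeF b t * atinv t))
    (O.Toep atinv)

/-- `𝒫 V(a,b) 𝒬`. -/
def PVQ (a b atinv : UC → ℂ) : (LpC p × LpC p) →L[ℂ] (LpC p × LpC p) :=
  mat2 (O.P ∘L O.M (fun t => a t - b t * tildeF b t * atinv t) ∘L O.Q)
    (O.P ∘L O.M (fun t => b t * atinv t) ∘L O.Q)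
    (O.P ∘L O.M (fun t => -(tildeF b t * atinv t)) ∘L O.Q)
    (O.P ∘L O.M atinv ∘L O.Q)

/-- `A₁ := I - diag(P,Q)·[[a,b],[b̃,ã]]·diag(Q,P)`. -/
def A1 (a b : UC → ℂ) : (LpC p × LpC p) →L[ℂ] (LpC p × LpC p) :=
  ContinuousLinearMap.id ℂ (LpC p × LpC p) -
    mat2 (O.P ∘L O.M a ∘L O.Q) (O.P ∘L O.M b ∘L O.P)
      (O.Q ∘L O.M (tildeF b) ∘L O.Q) (O.Q ∘L O.M (tildeF a) ∘L O.P)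

/-- `A₂ := I + 𝒫 V(a,b) 𝒬`. -/
def A2 (a b atinv : UC → ℂ) : (LpC p × LpC p) →L[ℂ] (LpC p × LpC p) :=
  ContinuousLinearMap.id ℂ (LpC p × LpC p) + O.PVQ a b atinv

/-- The operator `W φ := T_r⁻¹(c) T(ã⁻¹) φ - J Q c P T_r⁻¹(c) T(ã⁻¹) φ + J Q ã⁻¹ φ`,
where `Trc` is (the chosen right inverse) `T_r⁻¹(c)`. -/
def Wop (c atinv : UC → ℂ) (Trc : LpC p →L[ℂ] LpC p) : LpC p →L[ℂ] LpC p :=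
  Trc ∘L O.Toep atinv
    - O.J ∘L O.Q ∘L O.M c ∘L O.P ∘L Trc ∘L O.Toep atinv
    + O.J ∘L O.Q ∘L O.M atinv

/-- The particular solution
`Tc T(ã⁻¹) Td f - J Q c Tc T(ã⁻¹) Td f + J Q ã⁻¹ Td f`, where `Tc`, `Td` are
(one-sided) inverses of `T(c)`, `T(d)`. -/
def baseSol (c atinv : UC → ℂ) (Tc Td : LpC p →L[ℂ] LpC p) (f : LpC p) : LpC p :=
  Tc (O.Toep atinv (Td f)) - O.J (O.Q (O.M c (Tc (O.Toep atinv (Td f)))))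
    + O.J (O.Q (O.M atinv (Td f)))

end CircleOps

/-- Wiener–Hopf factorization data for `g` in the sense of the paper:
`g = g₋ t^n g₊` with `n = -ind` (so `ind = ind T(g)`), together with the membership and
normalization conditions.  (For simplicity all factors are taken essentially bounded.) -/
structure WHFact (g : UC → ℂ) where
  ind : ℤ
  gp : UC → ℂ
  gm : UC → ℂ
  gpInv : UC → ℂ
  gmInv : UC → ℂ
  hgp : MemLp gp ⊤ volUC
  hgm : MemLp gm ⊤ volUC
  hgpInv : MemLp gpInv ⊤ volUC
  hgmInv : MemLp gmInv ⊤ volUC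
  hp_inv : ∀ᵐ t ∂volUC, gp t * gpInv t = 1
  hm_inv : ∀ᵐ t ∂volUC, gm t * gmInv t = 1
  hfact : ∀ᵐ t ∂volUC, g t = gm t * tpow (-ind) t * gp t
  hgpH : ∀ n : ℤ, n < 0 → fourierCoeff gp n = 0
  hgpInvH : ∀ n : ℤ, n < 0 → fourierCoeff gpInv n = 0
  hgmH : ∀ n : ℤ, 0 < n → fourierCoeff gm n = 0
  hgmInvH : ∀ n : ℤ, 0 < n → fourierCoeff gmInv n = 0
  hgmInfty : fourierCoeff gm 0 = 1

/-- The right inverse `T_r⁻¹(g) := T(g₊⁻¹) T(g₋⁻¹) T(t^{-n})`, `n = -ind ≤ 0`. -/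
def WHFact.Tr {g : UC → ℂ} (F : WHFact g) {p : ℝ≥0∞} [Fact (1 ≤ p)] (O : CircleOps p) :
    LpC p →L[ℂ] LpC p :=
  O.Toep F.gpInv ∘L O.Toep F.gmInv ∘L O.Toep (tpow F.ind)

/-- The left inverse `T_l⁻¹(g) := T(t^{-n}) T(g₊⁻¹) T(g₋⁻¹)`, `n = -ind ≥ 0`. -/
def WHFact.Tl {g : UC → ℂ} (F : WHFact g) {p : ℝ≥0∞} [Fact (1 ≤ p)] (O : CircleOps p) :
    LpC p →L[ℂ] LpC p :=
  O.Toep (tpow F.ind) ∘L O.Toep F.gpInv ∘L O.Toep F.gmInv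

/-- The number of kernel basis functions `u_0, …, u_{κ(i)}`: `m` if `κ = 2m`, `m+1` if
`κ = 2m+1`. -/
def numU (κ : ℤ) : ℕ := ((κ + 1) / 2).toNat

/-- The functions `u_k^{(κ(s),±)}`: for `κ = 2m`, `u_k(t) = t^{m-k-1} ± σ t^{m+k}`; for
`κ = 2m+1`, `u_k(t) = t^{m+k} ± σ t^{m-k}`.  Here `sgn = ±1`, and `σ` is the factorization
signature. -/
def ubasis (κ : ℤ) (σ sgn : ℂ) (k : ℕ) : UC → ℂ :=
  if κ % 2 = 0 then
    fun t => fourier (κ / 2 - (k:ℤ) - 1) t + sgn * σ * fourier (κ / 2 + (k:ℤ)) t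
  else
    fun t => fourier (κ / 2 + (k:ℤ)) t + sgn * σ * fourier (κ / 2 - (k:ℤ)) t

/-- `sign(r)`: `0` if `r = 0` and `1` if `r > 0` (as a complex scalar). -/
def sgnInd (κ : ℤ) : ℂ := if κ = 0 then 0 else 1


/-!
Write `u = φ + ψ`, `v = J(φ - ψ)` and `s = b̃ u + ã v`. On `H^p` the Toeplitz and Hankel operators
reduce to `T(a)φ = P(aφ)` and `H(b)φ = P(b Jφ)`; together with `J P = Q J` and `J a = ã J` this
gives `𝒥⁻¹ y = (P(au + bv), Q s)`, a vector of `im P × im Q`, which `A₁` fixes. Pointwise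
`V(a,b) (u, s) = (au + bv, v)`, and `Pu = u`, `Pv = 0`, so `𝒥⁻¹ y = (𝒫 V + 𝒬) (u, s)`. For every
idempotent `𝒫` and `𝒬 = I - 𝒫` one has `A₂ (𝒫 V 𝒫 + 𝒬) = 𝒫 V + 𝒬`, hence
`Y = 𝒫 A₂⁻¹ (𝒫 V + 𝒬) (u, s) = 𝒫 V 𝒫 (u, s) = 𝒫 V 𝒫 X₀`.

Since `P` and `J` are only given through their Fourier coefficients, the identities between them
rest on the uniqueness of Fourier coefficients of integrable functions on the circle.
-/

section FourierUniqueness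

open Filter Topology Set AddCircle
open scoped NNReal BoundedContinuousFunction

variable {E : Type*} [NormedAddCommGroup E]

theorem ae_eq_zero_of_forall_integral_smul_eq_zero [NormedSpace ℝ E] [CompleteSpace E]
    {X : Type*} [TopologicalSpace X] [HasOuterApproxClosed X] [MeasurableSpace X] [BorelSpace X]
    {μ : Measure X} {f : X → E} (hf : Integrable f μ)
    (h : ∀ g : X →ᵇ ℝ≥0, ∫ x, (g x : ℝ) • f x ∂μ = 0) : f =ᵐ[μ] 0 := by
  refine ae_eq_zero_of_forall_setIntegral_isClosed_eq_zero hf fun s hs => ?_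
  have hlim : Tendsto (fun n => ∫ x, (hs.apprSeq n x : ℝ) • f x ∂μ) atTop
      (𝓝 (∫ x, s.indicator f x ∂μ)) := by
    refine tendsto_integral_of_dominated_convergence (fun x => ‖f x‖)
      (fun n => (NNReal.continuous_coe.comp (hs.apprSeq n).continuous).aestronglyMeasurable.smul
        hf.1) hf.norm (fun n => ae_of_all _ fun x => ?_) (ae_of_all _ fun x => ?_)
    · rw [norm_smul, NNReal.norm_eq]
      exact mul_le_of_le_one_left (norm_nonneg _) (HasOuterApproxClosed.apprSeq_apply_le_one hs n x)
    · have hx := ((NNReal.continuous_coe.tendsto _).comp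
        (tendsto_pi_nhds.mp (HasOuterApproxClosed.tendsto_apprSeq hs) x)).smul_const (f x)
      by_cases hxs : x ∈ s <;> simpa [hxs] using hx
  simp only [h, tendsto_const_nhds_iff] at hlim
  rw [← integral_indicator hs.measurableSet, hlim]

variable {T : ℝ} [hT : Fact (0 < T)]

theorem AddCircle.ae_volume_eq_ae_haarAddCircle :
    ae (volume : Measure (AddCircle T)) = ae haarAddCircle := by
  rw [volume_eq_smul_haarAddCircle]
  exact Measure.ae_ennreal_smul_measure_eq (ENNReal.ofReal_pos.2 hT.out).ne' _

theorem AddCircle.integrable_haarAddCircle_iff {f : AddCircle T → E} :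
    Integrable f haarAddCircle ↔ Integrable f := by
  rw [volume_eq_smul_haarAddCircle,
    integrable_smul_measure (ENNReal.ofReal_pos.2 hT.out).ne' ENNReal.ofReal_ne_top]

variable [NormedSpace ℂ E]

theorem fourierCoeff_sub {f g : AddCircle T → E} (hf : Integrable f haarAddCircle)
    (hg : Integrable g haarAddCircle) :
    fourierCoeff (f - g) = fourierCoeff f - fourierCoeff g := by
  ext n
  simp only [fourierCoeff, Pi.sub_apply, smul_sub]
  exact integral_sub (hf.fourier_smul _) (hg.fourier_smul _)

theorem fourierCoeff_comp_neg (f : AddCircle T → E) (n : ℤ) :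
    fourierCoeff (fun t => f (-t)) n = fourierCoeff f (-n) := by
  simp only [fourierCoeff, neg_neg]
  rw [← integral_neg_eq_self]
  simp only [neg_neg, fourier_apply, zsmul_neg, neg_zsmul, neg_neg]

theorem fourierCoeff_fourier_smul (k : ℤ) (f : AddCircle T → E) (n : ℤ) :
    fourierCoeff (fun t => fourier k t • f t) n = fourierCoeff f (n - k) := by
  simp only [fourierCoeff, smul_smul, ← fourier_add, show -n + k = -(n - k) by ring]

theorem fourierCoeff_congr_ae_volume {f g : AddCircle T → E} (h : f =ᵐ[volume] g) :
    fourierCoeff f = fourierCoeff g :=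
  fourierCoeff_congr_ae (by rwa [EventuallyEq, ← ae_volume_eq_ae_haarAddCircle])

theorem integral_smul_eq_zero_of_fourierCoeff_eq_zero {f : AddCircle T → E}
    (hf : Integrable f haarAddCircle) (h : ∀ n, fourierCoeff f n = 0) (g : C(AddCircle T, ℂ)) :
    ∫ t, g t • f t ∂haarAddCircle = 0 := by
  have hint (g : C(AddCircle T, ℂ)) : Integrable (fun t => g t • f t) haarAddCircle :=
    hf.bdd_smul ‖g‖ g.continuous.aestronglyMeasurable (ae_of_all _ g.norm_coe_le_norm)
  let L : C(AddCircle T, ℂ) →L[ℂ] E := LinearMap.mkContinuous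
    { toFun := fun g => ∫ t, g t • f t ∂haarAddCircle
      map_add' := fun g₁ g₂ => by
        simp only [ContinuousMap.add_apply, add_smul]
        exact integral_add (hint g₁) (hint g₂)
      map_smul' := fun c g => by
        simp only [ContinuousMap.smul_apply, smul_eq_mul, mul_smul, RingHom.id_apply]
        exact integral_smul c _ }
    (∫ t, ‖f t‖ ∂haarAddCircle) fun g => by
      calc ‖∫ t, g t • f t ∂haarAddCircle‖ ≤ ∫ t, ‖g‖ * ‖f t‖ ∂haarAddCircle :=
            norm_integral_le_of_norm_le (hf.norm.const_mul _) (ae_of_all _ fun t => by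
              rw [norm_smul]
              exact mul_le_mul_of_nonneg_right (g.norm_coe_le_norm t) (norm_nonneg _))
        _ = (∫ t, ‖f t‖ ∂haarAddCircle) * ‖g‖ := by rw [integral_const_mul, mul_comm]
  have hspan : Submodule.span ℂ (range fourier) ≤
      LinearMap.ker (L : C(AddCircle T, ℂ) →ₗ[ℂ] E) := by
    rw [Submodule.span_le]
    rintro _ ⟨n, rfl⟩
    simpa [L, fourierCoeff, -fourier_apply] using h (-n)
  have hker := Submodule.topologicalClosure_minimal _ hspan L.isClosed_ker
  rw [span_fourier_closure_eq_top] at hker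
  exact hker Submodule.mem_top

theorem ae_eq_zero_of_fourierCoeff_eq_zero [CompleteSpace E] {f : AddCircle T → E}
    (hf : Integrable f haarAddCircle) (h : ∀ n, fourierCoeff f n = 0) :
    f =ᵐ[haarAddCircle] 0 :=
  ae_eq_zero_of_forall_integral_smul_eq_zero hf fun g => by
    have hg := integral_smul_eq_zero_of_fourierCoeff_eq_zero hf h
      ⟨fun t => ((g t : ℝ) : ℂ), by fun_prop⟩
    simp only [ContinuousMap.coe_mk] at hg
    simpa only [Complex.coe_smul] using hg

theorem ae_eq_of_fourierCoeff_eq [CompleteSpace E] {f g : AddCircle T → E} (hf : Integrable f)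
    (hg : Integrable g) (h : fourierCoeff f = fourierCoeff g) : f =ᵐ[volume] g := by
  rw [← integrable_haarAddCircle_iff] at hf hg
  have hzero := ae_eq_zero_of_fourierCoeff_eq_zero (hf.sub hg)
    (by simp [fourierCoeff_sub hf hg, h])
  rw [EventuallyEq, ae_volume_eq_ae_haarAddCircle]
  filter_upwards [hzero] with t ht
  simpa [sub_eq_zero] using ht

end FourierUniqueness

namespace MeasureTheory.Lp

variable {E : Type*} [NormedAddCommGroup E] [NormedSpace ℂ E]
  {T : ℝ} [Fact (0 < T)] {p : ℝ≥0∞} [Fact (1 ≤ p)]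

theorem ext_fourierCoeff [CompleteSpace E] {f g : Lp E p (volume : Measure (AddCircle T))}
    (h : ∀ n, fourierCoeff f n = fourierCoeff g n) : f = g :=
  Lp.ext <| ae_eq_of_fourierCoeff_eq ((Lp.memLp f).integrable Fact.out)
    ((Lp.memLp g).integrable Fact.out) (funext h)

def fourierCoeffAddHom (n : ℤ) : Lp E p (volume : Measure (AddCircle T)) →+ E where
  toFun f := fourierCoeff f n
  map_zero' := by
    rw [fourierCoeff_congr_ae_volume (Lp.coeFn_zero E p volume)]
    simp [fourierCoeff]
  map_add' f g := by
    rw [fourierCoeff_congr_ae_volume (Lp.coeFn_add f g), fourierCoeff.add]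
    · rfl
    all_goals exact AddCircle.integrable_haarAddCircle_iff.2 ((Lp.memLp _).integrable Fact.out)

theorem fourierCoeff_zero (n : ℤ) :
    fourierCoeff ⇑(0 : Lp E p (volume : Measure (AddCircle T))) n = 0 :=
  map_zero (fourierCoeffAddHom n)

theorem fourierCoeff_sub (f g : Lp E p (volume : Measure (AddCircle T))) (n : ℤ) :
    fourierCoeff ⇑(f - g) n = fourierCoeff f n - fourierCoeff g n :=
  map_sub (fourierCoeffAddHom n) f g

end MeasureTheory.Lp

theorem IsIdempotentElem.mul_inverse_one_add_mul_mul_one_sub {R : Type*} [Ring R] {P V : R}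
    (hP : IsIdempotentElem P) (hA : IsUnit (1 + P * V * (1 - P))) :
    P * Ring.inverse (1 + P * V * (1 - P)) * (P * V + (1 - P)) = P * V * P := by
  have hPQ : P * (1 - P) = 0 := by rw [mul_sub, mul_one, hP.eq, sub_self]
  have hQP : (1 - P) * P = 0 := by rw [sub_mul, one_mul, hP.eq, sub_self]
  have hQQ : (1 - P) * (1 - P) = 1 - P := by rw [mul_sub, mul_one, hQP, sub_zero]
  have hsol : (1 + P * V * (1 - P)) * (P * V * P + (1 - P)) = P * V + (1 - P) := by
    calc (1 + P * V * (1 - P)) * (P * V * P + (1 - P))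
        = P * V * P + (1 - P) + P * V * ((1 - P) * P) * V * P + P * V * ((1 - P) * (1 - P)) := by
          noncomm_ring
      _ = P * V + (1 - P) := by rw [hQP, hQQ]; noncomm_ring
  rw [mul_assoc, ← hsol, Ring.inverse_mul_cancel_left _ _ hA, mul_add, hPQ, add_zero,
    ← mul_assoc, ← mul_assoc, hP.eq]

theorem ContinuousLinearMap.ring_inverse_apply_of_apply_eq {E : Type*} [NormedAddCommGroup E]
    [NormedSpace ℂ E] {A : E →L[ℂ] E} (hA : IsUnit A) {x y : E} (h : A x = y) :
    Ring.inverse A y = x := by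
  rw [← h]
  exact DFunLike.congr_fun (Ring.inverse_mul_cancel _ hA) x

theorem mat2_apply {E : Type*} [NormedAddCommGroup E] [NormedSpace ℂ E]
    (A B C D : E →L[ℂ] E) (x y : E) : mat2 A B C D (x, y) = (A x + B y, C x + D y) := rfl

theorem MeasureTheory.MemLp.tildeF {a : UC → ℂ} {q : ℝ≥0∞} (ha : MemLp a q volUC) :
    MemLp (tildeF a) q volUC :=
  ha.comp_measurePreserving (Measure.measurePreserving_neg _)

namespace CircleOps

variable {p : ℝ≥0∞} [Fact (1 ≤ p)] (O : CircleOps p)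

theorem Q_apply (f : LpC p) : O.Q f = f - O.P f := rfl

theorem fourierCoeff_Q (f : LpC p) (n : ℤ) :
    fourierCoeff (O.Q f) n = if 0 ≤ n then 0 else fourierCoeff f n := by
  rw [Q_apply, Lp.fourierCoeff_sub, O.P_spec]
  split_ifs <;> simp

theorem P_P (f : LpC p) : O.P (O.P f) = O.P f :=
  Lp.ext_fourierCoeff fun n => by simp only [O.P_spec]; split_ifs <;> rfl

theorem Q_P (f : LpC p) : O.Q (O.P f) = 0 := by
  rw [Q_apply, P_P, sub_self]

theorem P_Q (f : LpC p) : O.P (O.Q f) = 0 := by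
  rw [Q_apply, map_sub, P_P, sub_self]

theorem J_J (f : LpC p) : O.J (O.J f) = f :=
  Lp.ext_fourierCoeff fun n => by rw [O.J_spec, O.J_spec, show -(-n - 1) - 1 = n by ring]

theorem J_P (f : LpC p) : O.J (O.P f) = O.Q (O.J f) :=
  Lp.ext_fourierCoeff fun n => by
    rw [O.J_spec, O.P_spec, fourierCoeff_Q, O.J_spec]
    by_cases hn : 0 ≤ n
    · rw [if_neg (by omega), if_pos hn]
    · rw [if_pos (by omega), if_neg hn]

theorem P_of_mem_hardy {f : LpC p} (hf : f ∈ HardyS p) : O.P f = f :=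
  Lp.ext_fourierCoeff fun n => by
    rw [O.P_spec]
    split_ifs with hn
    · rfl
    · exact (hf n (by omega)).symm

theorem P_J_of_mem_hardy {f : LpC p} (hf : f ∈ HardyS p) : O.P (O.J f) = 0 :=
  Lp.ext_fourierCoeff fun n => by
    rw [O.P_spec, Lp.fourierCoeff_zero, O.J_spec]
    split_ifs with hn
    · exact hf _ (by omega)
    · rfl

theorem coeFn_J (f : LpC p) : O.J f =ᵐ[volUC] fun t => fourier (-1) t * f (-t) := by
  refine ae_eq_of_fourierCoeff_eq ((Lp.memLp _).integrable Fact.out)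
    (((Lp.memLp f).integrable Fact.out).comp_neg.bdd_mul (map_continuous _).aestronglyMeasurable
      (ae_of_all _ fun t => by rw [fourier_apply, Circle.norm_coe])) (funext fun n => ?_)
  calc fourierCoeff (O.J f) n = fourierCoeff f (-(n - -1)) := by rw [O.J_spec]; ring_nf
    _ = _ := (fourierCoeff_comp_neg _ _).symm.trans (fourierCoeff_fourier_smul (-1) _ n).symm

theorem J_M {a : UC → ℂ} (ha : MemLp a ⊤ volUC) (f : LpC p) :
    O.J (O.M a f) = O.M (tildeF a) (O.J f) := by
  refine Lp.ext_fourierCoeff fun n => ?_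
  have hJ : O.M (tildeF a) (O.J f) =ᵐ[volUC] fun t => fourier (-1) t * (a (-t) * f (-t)) := by
    filter_upwards [O.M_spec _ ha.tildeF _, O.coeFn_J f] with t h₁ h₂
    rw [h₁, h₂, tildeF]
    ring
  rw [O.J_spec, fourierCoeff_congr_ae_volume (O.M_spec a ha f),
    fourierCoeff_congr_ae_volume hJ]
  calc fourierCoeff (fun t => a t * f t) (-n - 1)
      = fourierCoeff (fun t => a (-t) * f (-t)) (n - -1) := by
        rw [fourierCoeff_comp_neg (fun t => a t * f t)]; ring_nf
    _ = _ := (fourierCoeff_fourier_smul (-1) _ n).symm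

theorem Toep_apply_of_mem_hardy (a : UC → ℂ) {f : LpC p} (hf : f ∈ HardyS p) :
    O.Toep a f = O.P (O.M a f) := by
  rw [Toep, ContinuousLinearMap.comp_apply, ContinuousLinearMap.comp_apply, O.P_of_mem_hardy hf]

theorem Hank_apply_of_mem_hardy (b : UC → ℂ) {f : LpC p} (hf : f ∈ HardyS p) :
    O.Hank b f = O.P (O.M b (O.J f)) := by
  simp only [Hank, ContinuousLinearMap.comp_apply, Q_apply, O.P_J_of_mem_hardy hf, sub_zero]

theorem Jinv_Rdiag_of_mem_hardy {a b : UC → ℂ} (ha : MemLp a ⊤ volUC) (hb : MemLp b ⊤ volUC)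
    {φ ψ : LpC p} (hφ : φ ∈ HardyS p) (hψ : ψ ∈ HardyS p) :
    O.Jinv (O.Rdiag a b (φ, ψ)) =
      (O.P (O.M a (φ + ψ) + O.M b (O.J (φ - ψ))),
        O.Q (O.M (tildeF b) (φ + ψ) + O.M (tildeF a) (O.J (φ - ψ)))) := by
  simp only [Rdiag, Jinv, mat2_apply, add_apply, sub_apply, zero_apply,
    ContinuousLinearMap.id_apply, neg_apply, add_zero, zero_add,
    O.Toep_apply_of_mem_hardy _ hφ, O.Toep_apply_of_mem_hardy _ hψ,
    O.Hank_apply_of_mem_hardy _ hφ, O.Hank_apply_of_mem_hardy _ hψ]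
  refine Prod.ext ?_ ?_ <;>
    simp only [map_add, map_sub, O.J_P, O.J_M ha, O.J_M hb, O.J_J] <;> abel

theorem A1_apply_mk_P_Q (a b : UC → ℂ) (x y : LpC p) :
    O.A1 a b (O.P x, O.Q y) = (O.P x, O.Q y) := by
  simp [A1, mat2_apply, Q_P, P_Q]

/-- Multiplication by the matrix function `V(a,b)`, with `atinv` standing for `ã⁻¹`. -/
def MV (a b atinv : UC → ℂ) : (LpC p × LpC p) →L[ℂ] (LpC p × LpC p) :=
  mat2 (O.M fun t => a t - b t * tildeF b t * atinv t) (O.M fun t => b t * atinv t)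
    (O.M fun t => -(tildeF b t * atinv t)) (O.M atinv)

theorem isIdempotentElem_PP : IsIdempotentElem O.PP := by
  ext ⟨x, y⟩ <;> simp [PP, mat2_apply, P_P]

theorem TV_eq (a b atinv : UC → ℂ) : O.TV a b atinv = O.PP * O.MV a b atinv * O.PP := by
  ext ⟨x, y⟩ <;> simp [TV, PP, MV, mat2_apply, Toep]

theorem TV_apply_mk_P (a b atinv : UC → ℂ) (x y : LpC p) :
    O.TV a b atinv (x, O.P y) = O.TV a b atinv (x, y) := by
  simp [TV, Toep, mat2_apply, P_P]

theorem A2_eq (a b atinv : UC → ℂ) :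
    O.A2 a b atinv = 1 + O.PP * O.MV a b atinv * (1 - O.PP) := by
  ext ⟨x, y⟩ <;> simp [A2, PVQ, PP, MV, mat2_apply, Q_apply]

theorem coeFn_M_add_M {f g : UC → ℂ} (hf : MemLp f ⊤ volUC) (hg : MemLp g ⊤ volUC)
    (x y : LpC p) : O.M f x + O.M g y =ᵐ[volUC] fun t => f t * x t + g t * y t := by
  filter_upwards [Lp.coeFn_add (O.M f x) (O.M g y), O.M_spec f hf x, O.M_spec g hg y]
    with t h₁ h₂ h₃
  rw [h₁, Pi.add_apply, h₂, h₃]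

section Symbol

variable {a b atinv : UC → ℂ} (ha : MemLp a ⊤ volUC) (hb : MemLp b ⊤ volUC)
  (hatinv : MemLp atinv ⊤ volUC) (hai : ∀ᵐ t ∂volUC, tildeF a t * atinv t = 1)
include ha hb hatinv hai

theorem MV_apply_mk_M_add_M (u v : LpC p) :
    O.MV a b atinv (u, O.M (tildeF b) u + O.M (tildeF a) v) = (O.M a u + O.M b v, v) := by
  have hc : MemLp (fun t => -(tildeF b t * atinv t)) ⊤ volUC :=
    (hatinv.mul' (r := ⊤) hb.tildeF).neg
  have hd : MemLp (fun t => b t * atinv t) ⊤ volUC := hatinv.mul' (r := ⊤) hb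
  have hbc : MemLp (fun t => a t - b t * tildeF b t * atinv t) ⊤ volUC :=
    ha.sub (hatinv.mul' (r := ⊤) (hb.tildeF.mul' (r := ⊤) hb))
  set s := O.M (tildeF b) u + O.M (tildeF a) v
  have hs := O.coeFn_M_add_M hb.tildeF ha.tildeF u v
  rw [MV, mat2_apply]
  refine Prod.ext (Lp.ext ?_) (Lp.ext ?_)
  · filter_upwards [O.coeFn_M_add_M hbc hd u s, O.coeFn_M_add_M ha hb u v, hs, hai]
      with t h₁ h₂ h₃ h₄
    rw [h₁, h₂, h₃]
    linear_combination (b t * v t) * h₄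
  · filter_upwards [O.coeFn_M_add_M hc hatinv u s, hs, hai] with t h₁ h₂ h₃
    rw [h₁, h₂]
    linear_combination v t * h₃

theorem PP_MV_add_one_sub_PP_apply {u v : LpC p} (hPu : O.P u = u) (hPv : O.P v = 0) :
    (O.PP * O.MV a b atinv + (1 - O.PP)) (u, O.M (tildeF b) u + O.M (tildeF a) v) =
      (O.P (O.M a u + O.M b v), O.Q (O.M (tildeF b) u + O.M (tildeF a) v)) := by
  simp [O.MV_apply_mk_M_add_M ha hb hatinv hai, PP, mat2_apply, hPu, hPv, Q_apply]

end Symbol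

end CircleOps

theorem stmt0_general (p : ℝ≥0∞) [Fact (1 ≤ p)]
    (a b atinv : UC → ℂ)
    (ha : MemLp a ⊤ volUC) (hb : MemLp b ⊤ volUC) (hatinv : MemLp atinv ⊤ volUC)
    (hai : ∀ᵐ t ∂volUC, tildeF a t * atinv t = 1)
    (O : CircleOps p)
    (hA1 : IsUnit (O.A1 a b)) (hA2 : IsUnit (O.A2 a b atinv))
    (g h φ ψ : LpC p)
    (hφ : φ ∈ HardyS p) (hψ : ψ ∈ HardyS p)
    (hsol : O.Rdiag a b (φ, ψ) = (g, h)) :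
    O.TV a b atinv
        (φ + ψ, O.P (O.M (tildeF b) (φ + ψ) + O.M (tildeF a) (O.J (φ - ψ))))
      = O.PP (Ring.inverse (O.A2 a b atinv) (Ring.inverse (O.A1 a b) (O.Jinv (g, h)))) := by
  have hPu : O.P (φ + ψ) = φ + ψ := by rw [map_add, O.P_of_mem_hardy hφ, O.P_of_mem_hardy hψ]
  have hPv : O.P (O.J (φ - ψ)) = 0 := by
    rw [map_sub, map_sub, O.P_J_of_mem_hardy hφ, O.P_J_of_mem_hardy hψ, sub_zero]
  rw [← hsol, O.Jinv_Rdiag_of_mem_hardy ha hb hφ hψ,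
    ContinuousLinearMap.ring_inverse_apply_of_apply_eq hA1 (O.A1_apply_mk_P_Q a b _ _),
    ← O.PP_MV_add_one_sub_PP_apply ha hb hatinv hai hPu hPv, O.TV_apply_mk_P, O.TV_eq]
  rw [O.A2_eq] at hA2 ⊢
  exact DFunLike.congr_fun (O.isIdempotentElem_PP.mul_inverse_one_add_mul_mul_one_sub hA2).symm _

/-- Lemma 2.1: if `ℛ x₀ = y` on `H^p × H^p`, then
`X₀ = (φ+ψ, P(b̃(φ+ψ) + ã J(φ-ψ)))` solves `𝒫 V(a,b) 𝒫 X = Y` with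
`Y = 𝒫 A₂⁻¹ A₁⁻¹ 𝒥⁻¹ y`. -/
theorem stmt0 (p : ℝ≥0∞) [Fact (1 ≤ p)] (hp : 1 < p) (hp' : p ≠ ⊤)
    (a b atinv : UC → ℂ)
    (ha : MemLp a ⊤ volUC) (hb : MemLp b ⊤ volUC) (hatinv : MemLp atinv ⊤ volUC)
    (hai : ∀ᵐ t ∂volUC, tildeF a t * atinv t = 1)
    (O : CircleOps p)
    (hA1 : IsUnit (O.A1 a b)) (hA2 : IsUnit (O.A2 a b atinv))
    (g h φ ψ : LpC p)
    (hg : g ∈ HardyS p) (hh : h ∈ HardyS p)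
    (hφ : φ ∈ HardyS p) (hψ : ψ ∈ HardyS p)
    (hsol : O.Rdiag a b (φ, ψ) = (g, h)) :
    O.TV a b atinv
        (φ + ψ, O.P (O.M (tildeF b) (φ + ψ) + O.M (tildeF a) (O.J (φ - ψ))))
      = O.PP (Ring.inverse (O.A2 a b atinv) (Ring.inverse (O.A1 a b) (O.Jinv (g, h)))) :=
  stmt0_general p a b atinv ha hb hatinv hai O hA1 hA2 g h φ ψ hφ hψ hsol

end
end

section
/- Let 1<p<∞, a,b ∈ L^∞(𝕋), f ∈ H^p(𝕋), and n ∈ ℕ. If the equation (T(t^{-n}a) + H(t^n b))ψ = f is solvable and has a solution ψ₀ belonging to the image of the operator T(t^n): H^p(𝕋) → H^p(𝕋), then the equation (T(a)+H(b))φ = f is also solvable and φ₀ := T(t^{-n})ψ₀ is one of its solutions. -/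
open MeasureTheory Complex Real BigOperators
open scoped ENNReal

noncomputable section

/-! Write `ψ₀ = T(tⁿ)χ` with `χ ∈ H^p`. As `n ≥ 0`, `tⁿχ` already lies in `H^p`, so `ψ₀ = tⁿχ`
and `T(t⁻ⁿ)ψ₀ = χ`. In `T(t⁻ⁿa)ψ₀ = P(t⁻ⁿa·tⁿχ)` the powers of `t` cancel, giving `T(a)χ`; and
since `J(tⁿχ) = t⁻ⁿJχ` has only negative frequencies, `Q` fixes it and
`H(tⁿb)ψ₀ = P(tⁿb·t⁻ⁿJχ) = H(b)χ`. All operator identities are checked on Fourier coefficients,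
which determine an integrable function on the circle: orthogonality to the characters extends
to all continuous functions by Stone–Weierstrass, and then to indicators of closed sets. -/

open Filter Topology
open scoped NNReal

theorem ae_eq_zero_of_forall_integral_continuousMap_smul_eq_zero {X E : Type*}
    [TopologicalSpace X] [MeasurableSpace X] [BorelSpace X] [HasOuterApproxClosed X]
    [NormedAddCommGroup E] [NormedSpace ℝ E] [CompleteSpace E] {μ : Measure X} {f : X → E}
    (hf : Integrable f μ) (h : ∀ g : C(X, ℝ), ∫ x, g x • f x ∂μ = 0) : f =ᵐ[μ] 0 := by
  refine ae_eq_zero_of_forall_setIntegral_isClosed_eq_zero hf fun s hs => ?_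
  -- `∫ x in s, f` is the limit of `∫ gₙ • f` for continuous `gₙ : X → [0, 1]` tending to `1_s`
  let g (n : ℕ) : C(X, ℝ) := ⟨fun x => hs.apprSeq n x, by fun_prop⟩
  have hlim : Tendsto (fun n => ∫ x, g n x • f x ∂μ) atTop (𝓝 (∫ x, s.indicator f x ∂μ)) := by
    refine tendsto_integral_of_dominated_convergence (‖f ·‖)
      (fun n => (g n).continuous.aestronglyMeasurable.smul hf.aestronglyMeasurable) hf.norm
      (fun n => ae_of_all _ fun x => ?_) (ae_of_all _ fun x => ?_)
    · rw [norm_smul]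
      refine mul_le_of_le_one_left (norm_nonneg _) ?_
      simpa [g] using HasOuterApproxClosed.apprSeq_apply_le_one hs n x
    · have hcont : Continuous fun r : ℝ≥0 => (r : ℝ) • f x := by fun_prop
      convert (hcont.tendsto _).comp
        (tendsto_pi_nhds.mp (HasOuterApproxClosed.tendsto_apprSeq hs) x) using 2
      · rfl
      · by_cases hxs : x ∈ s <;> simp [hxs]
  rw [← integral_indicator hs.measurableSet]
  exact tendsto_nhds_unique hlim (by simpa only [h] using tendsto_const_nhds)

namespace AddCircle

variable {T : ℝ} [Fact (0 < T)] {E : Type*} [NormedAddCommGroup E] {f g : AddCircle T → E}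

theorem ae_volume_eq_ae_haarAddCircle_s8 : ae (volume : Measure (AddCircle T)) = ae haarAddCircle := by
  rw [volume_eq_smul_haarAddCircle, Measure.ae_ennreal_smul_measure_eq]
  simpa using (Fact.out : 0 < T)

theorem integrable_haarAddCircle_iff_s8 : Integrable f haarAddCircle ↔ Integrable f volume := by
  rw [volume_eq_smul_haarAddCircle, integrable_smul_measure]
  · simpa using (Fact.out : 0 < T)
  · exact ENNReal.ofReal_ne_top

theorem fourierCoeff_sub [NormedSpace ℂ E] (hf : Integrable f haarAddCircle)
    (hg : Integrable g haarAddCircle) :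
    fourierCoeff (f - g) = fourierCoeff f - fourierCoeff g := by
  ext n
  simpa [fourierCoeff, smul_sub, -fourier_apply] using
    integral_sub (hf.fourier_smul (-n)) (hg.fourier_smul (-n))

theorem fourierCoeff_fourier_smul [NormedSpace ℂ E] (k : ℤ) (f : AddCircle T → E) (n : ℤ) :
    fourierCoeff (fun t => fourier k t • f t) n = fourierCoeff f (n - k) := by
  simp only [fourierCoeff, smul_smul, ← fourier_add, show -n + k = -(n - k) by ring]

theorem integral_smul_eq_zero_of_fourierCoeff_eq_zero [NormedSpace ℂ E]
    (hf : Integrable f haarAddCircle)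
    (h : ∀ n, fourierCoeff f n = 0) (φ : C(AddCircle T, ℂ)) :
    ∫ t, φ t • f t ∂haarAddCircle = 0 := by
  have hint (φ : C(AddCircle T, ℂ)) : Integrable (fun t => φ t • f t) haarAddCircle :=
    hf.bdd_smul ‖φ‖ φ.continuous.aestronglyMeasurable (ae_of_all _ φ.norm_coe_le_norm)
  let L : C(AddCircle T, ℂ) →L[ℂ] E := LinearMap.mkContinuous
    { toFun φ := ∫ t, φ t • f t ∂haarAddCircle
      map_add' φ ψ := by
        simp only [ContinuousMap.add_apply, add_smul]
        exact integral_add (hint φ) (hint ψ)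
      map_smul' c φ := by
        simp only [ContinuousMap.smul_apply, smul_eq_mul, mul_smul]
        exact integral_smul c _ }
    (∫ t, ‖f t‖ ∂haarAddCircle) fun φ => by
      rw [mul_comm, ← integral_const_mul]
      refine norm_integral_le_of_norm_le (hf.norm.const_mul _) (ae_of_all _ fun t => ?_)
      rw [norm_smul]
      exact mul_le_mul_of_nonneg_right (φ.norm_coe_le_norm t) (norm_nonneg _)
  -- `L` vanishes on the characters, whose span is dense by Stone–Weierstrass
  have hL : L = 0 := by
    refine ContinuousLinearMap.ext_on
      (Submodule.dense_iff_topologicalClosure_eq_top.mpr span_fourier_closure_eq_top) ?_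
    rintro _ ⟨n, rfl⟩
    show ∫ t, fourier n t • f t ∂haarAddCircle = 0
    simpa only [fourierCoeff, neg_neg] using h (-n)
  exact congr($hL φ)

theorem ae_eq_zero_of_fourierCoeff_eq_zero [NormedSpace ℂ E] [CompleteSpace E]
    (hf : Integrable f haarAddCircle)
    (h : ∀ n, fourierCoeff f n = 0) : f =ᵐ[haarAddCircle] 0 :=
  ae_eq_zero_of_forall_integral_continuousMap_smul_eq_zero hf fun φ => by
    convert integral_smul_eq_zero_of_fourierCoeff_eq_zero hf h ⟨fun t => φ t, by fun_prop⟩ using 3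
    exact (Complex.coe_smul _ _).symm

theorem fourierCoeff_congr_ae_volume [NormedSpace ℂ E] (h : f =ᵐ[volume] g) :
    fourierCoeff f = fourierCoeff g :=
  fourierCoeff_congr_ae (by rwa [EventuallyEq, ← ae_volume_eq_ae_haarAddCircle_s8])

theorem fourierCoeff_Lp_zero {p : ℝ≥0∞} [NormedSpace ℂ E] :
    fourierCoeff ⇑(0 : Lp E p (volume : Measure (AddCircle T))) = 0 := by
  rw [fourierCoeff_congr_ae_volume (Lp.coeFn_zero E p _)]
  ext n
  simp [fourierCoeff]

theorem Lp_ext_of_fourierCoeff [NormedSpace ℂ E] [CompleteSpace E] {p : ℝ≥0∞} [Fact (1 ≤ p)]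
    {f g : Lp E p (volume : Measure (AddCircle T))}
    (h : fourierCoeff f = fourierCoeff g) : f = g := by
  have hint (u : Lp E p (volume : Measure (AddCircle T))) : Integrable u haarAddCircle :=
    integrable_haarAddCircle_iff_s8.mpr ((Lp.memLp u).integrable Fact.out)
  refine Lp.ext ?_
  rw [Filter.EventuallyEq, ae_volume_eq_ae_haarAddCircle_s8]
  filter_upwards [ae_eq_zero_of_fourierCoeff_eq_zero ((hint f).sub (hint g))
    (by simp [fourierCoeff_sub (hint f) (hint g), h])] with t ht
  exact sub_eq_zero.mp ht

end AddCircle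

theorem memLp_tpow (k : ℤ) : MemLp (tpow k) ⊤ volUC :=
  (BoundedContinuousFunction.mkOfCompact (fourier k)).memLp_top

theorem tpow_mul_tpow_neg (k : ℤ) (t : UC) : tpow k t * tpow (-k) t = 1 := by
  simp only [tpow, ← fourier_add, add_neg_cancel, fourier_zero]

namespace CircleOps

variable {p : ℝ≥0∞} [Fact (1 ≤ p)] (O : CircleOps p) {g : LpC p}

theorem fourierCoeff_M_tpow (k : ℤ) (g : LpC p) (n : ℤ) :
    fourierCoeff (O.M (tpow k) g) n = fourierCoeff g (n - k) := by
  rw [AddCircle.fourierCoeff_congr_ae_volume (O.M_spec _ (memLp_tpow k) g)]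
  exact AddCircle.fourierCoeff_fourier_smul k g n

theorem M_mul_apply {u v : UC → ℂ} (hu : MemLp u ⊤ volUC) (hv : MemLp v ⊤ volUC) (g : LpC p) :
    O.M (fun t => u t * v t) g = O.M u (O.M v g) := by
  refine Lp.ext ?_
  filter_upwards [O.M_spec _ (hv.mul' hu) g, O.M_spec u hu (O.M v g), O.M_spec v hv g]
    with t huv hu hv
  rw [huv, hu, hv, mul_assoc]

theorem M_tpow_neg_M_tpow (k : ℤ) (g : LpC p) : O.M (tpow (-k)) (O.M (tpow k) g) = g :=
  AddCircle.Lp_ext_of_fourierCoeff <| funext fun n => by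
    rw [O.fourierCoeff_M_tpow, O.fourierCoeff_M_tpow, sub_neg_eq_add, add_sub_cancel_right]

theorem J_M_tpow (k : ℤ) (g : LpC p) : O.J (O.M (tpow k) g) = O.M (tpow (-k)) (O.J g) :=
  AddCircle.Lp_ext_of_fourierCoeff <| funext fun n => by
    rw [O.J_spec, O.fourierCoeff_M_tpow, O.fourierCoeff_M_tpow, O.J_spec]
    congr 1
    ring

theorem P_eq_self_of_mem_hardy (hg : g ∈ HardyS p) : O.P g = g :=
  AddCircle.Lp_ext_of_fourierCoeff <| funext fun n => by
    rw [O.P_spec]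
    split_ifs with hn
    · rfl
    · exact (hg n (not_le.mp hn)).symm

theorem Q_J_eq_self_of_mem_hardy (hg : g ∈ HardyS p) : O.Q (O.J g) = O.J g := by
  have hPJ : O.P (O.J g) = 0 :=
    AddCircle.Lp_ext_of_fourierCoeff <| funext fun n => by
      rw [O.P_spec, O.J_spec, AddCircle.fourierCoeff_Lp_zero]
      split_ifs with hn
      · exact hg _ (by omega)
      · rfl
  simp [Q, hPJ]

theorem M_tpow_mem_hardy (n : ℕ) (hg : g ∈ HardyS p) : O.M (tpow n) g ∈ HardyS p :=
  fun k hk => by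
    rw [O.fourierCoeff_M_tpow]
    exact hg _ (by omega)

theorem Toep_tpow_eq_M_tpow_of_mem_hardy (n : ℕ) (hg : g ∈ HardyS p) :
    O.Toep (tpow n) g = O.M (tpow n) g := by
  simp only [Toep, ContinuousLinearMap.comp_apply, O.P_eq_self_of_mem_hardy hg,
    O.P_eq_self_of_mem_hardy (O.M_tpow_mem_hardy n hg)]

theorem Toep_tpow_neg_M_tpow (n : ℕ) (hg : g ∈ HardyS p) :
    O.Toep (tpow (-n)) (O.M (tpow n) g) = g := by
  simp only [Toep, ContinuousLinearMap.comp_apply,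
    O.P_eq_self_of_mem_hardy (O.M_tpow_mem_hardy n hg), O.M_tpow_neg_M_tpow,
    O.P_eq_self_of_mem_hardy hg]

theorem Toep_tpow_neg_mul_M_tpow (n : ℕ) (hg : g ∈ HardyS p) {a : UC → ℂ}
    (ha : MemLp a ⊤ volUC) :
    O.Toep (fun t => tpow (-n) t * a t) (O.M (tpow n) g) = O.Toep a g := by
  have hM : O.M (fun t => tpow (-n) t * a t) (O.M (tpow n) g) = O.M a g := by
    have hfun : (fun t => tpow (-n) t * a t * tpow n t) = a := funext fun t => by
      rw [mul_right_comm, mul_comm (tpow _ t), tpow_mul_tpow_neg, one_mul]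
    rw [← O.M_mul_apply (ha.mul' (memLp_tpow _)) (memLp_tpow n), hfun]
  simp only [Toep, ContinuousLinearMap.comp_apply,
    O.P_eq_self_of_mem_hardy (O.M_tpow_mem_hardy n hg), hM, O.P_eq_self_of_mem_hardy hg]

theorem Hank_tpow_mul_M_tpow (n : ℕ) (hg : g ∈ HardyS p) {b : UC → ℂ}
    (hb : MemLp b ⊤ volUC) :
    O.Hank (fun t => tpow n t * b t) (O.M (tpow n) g) = O.Hank b g := by
  have hM : O.M (fun t => tpow n t * b t) (O.M (tpow (-n)) (O.J g)) = O.M b (O.J g) := by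
    have hfun : (fun t => tpow n t * b t * tpow (-n) t) = b := funext fun t => by
      rw [mul_right_comm, tpow_mul_tpow_neg, one_mul]
    rw [← O.M_mul_apply (hb.mul' (memLp_tpow _)) (memLp_tpow _), hfun]
  simp only [Hank, ContinuousLinearMap.comp_apply]
  rw [O.Q_J_eq_self_of_mem_hardy (O.M_tpow_mem_hardy n hg), O.J_M_tpow, hM,
    O.Q_J_eq_self_of_mem_hardy hg]

end CircleOps

theorem stmt8_general (p : ℝ≥0∞) [Fact (1 ≤ p)]
    (a b : UC → ℂ) (ha : MemLp a ⊤ volUC) (hb : MemLp b ⊤ volUC)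
    (O : CircleOps p) (n : ℕ)
    (f ψ₀ : LpC p)
    (hψ : ψ₀ ∈ O.Toep (tpow (n : ℤ)) '' HardyS p)
    (hsol : (O.Toep (fun t => tpow (-(n : ℤ)) t * a t) + O.Hank (fun t => tpow (n : ℤ) t * b t))
        ψ₀ = f) :
    O.Toep (tpow (-(n : ℤ))) ψ₀ ∈ HardyS p ∧
    (O.Toep a + O.Hank b) (O.Toep (tpow (-(n : ℤ))) ψ₀) = f := by
  obtain ⟨χ, hχ, rfl⟩ := hψ
  rw [O.Toep_tpow_eq_M_tpow_of_mem_hardy n hχ] at hsol ⊢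
  rw [O.Toep_tpow_neg_M_tpow n hχ, ← hsol, add_apply, add_apply,
    O.Toep_tpow_neg_mul_M_tpow n hχ ha, O.Hank_tpow_mul_M_tpow n hχ hb]
  exact ⟨hχ, rfl⟩

/-- Lemma 3.8: if `(T(t^{-n}a) + H(t^n b))ψ = f` has a solution `ψ₀` in the
image of `T(t^n) : H^p → H^p`, then `(T(a)+H(b))φ = f` is solvable and `φ₀ = T(t^{-n})ψ₀` is
one of its solutions. -/
theorem stmt8 (p : ℝ≥0∞) [Fact (1 ≤ p)] (hp : 1 < p) (hp' : p ≠ ⊤)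
    (a b : UC → ℂ) (ha : MemLp a ⊤ volUC) (hb : MemLp b ⊤ volUC)
    (O : CircleOps p) (n : ℕ)
    (f ψ₀ : LpC p) (hf : f ∈ HardyS p)
    (hψ : ψ₀ ∈ O.Toep (tpow (n : ℤ)) '' HardyS p)
    (hsol : (O.Toep (fun t => tpow (-(n : ℤ)) t * a t) + O.Hank (fun t => tpow (n : ℤ) t * b t))
        ψ₀ = f) :
    O.Toep (tpow (-(n : ℤ))) ψ₀ ∈ HardyS p ∧
    (O.Toep a + O.Hank b) (O.Toep (tpow (-(n : ℤ))) ψ₀) = f :=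
  stmt8_general p a b ha hb O n f ψ₀ hψ hsol
end
end
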